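/- Let R^M consist of the identity matrix together with M-1 elements drawn uniformly at random without replacement from R \ {I}, independent of E, where E's distribution is invariant under R. Then the subsampled p-value p_M(E) = |{R ∈ R^M : g(RE) ≥ g(E)}|/M satisfies P(p_M(E) ≤ α) ≤ α for all α ∈ [0,1]. -/

import Mathlib

open MeasureTheory Matrix ProbabilityTheory
open scoped ENNReal

instance matrixMeasurableSpace (m k : Type*) : MeasurableSpace (Matrix m k ℝ) :=
  MeasurableSpace.pi

instance finsetSignMeasurableSpace (n : ℕ) : MeasurableSpace (Finset (Fin n → Bool)) := ⊤

/-- The diagonal sign matrix associated to a sign pattern `s`;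
the pattern `fun _ => true` gives the identity matrix. -/
noncomputable def signMat {n : ℕ} (s : Fin n → Bool) : Matrix (Fin n) (Fin n) ℝ :=
  Matrix.diagonal fun i => if s i then (1 : ℝ) else -1

/-!
Identify sign patterns with the group `G = (ℤˣ)ⁿ` acting on matrices by row sign changes.
Translating the subsample `S ∋ 1` on the right by a uniform `a ∈ G` turns it into a uniform
`M`-subset `A` together with a uniform point `a ∈ A`, and by invariance of the law of `E`,
the rank of `g(E)` among `{g(tE) : t ∈ S}` has the same law as the rank of `g(aE)` among
`{g(bE) : b ∈ A}`. For any fixed `A` and `E`, at most `αM` points of `A` have rank at most `αM`.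
-/

open Finset MulOpposite
open scoped Pointwise RightActions

section Rank

variable {ι : Type*}

/-- `M * p_M(E) = upperRank S (fun R => g (R • E)) 1`. -/
noncomputable def upperRank (A : Finset ι) (v : ι → ℝ) (a : ι) : ℕ :=
  #{b ∈ A | v a ≤ v b}

theorem card_filter_upperRank_le (A : Finset ι) (v : ι → ℝ) {k : ℝ} (hk : 0 ≤ k) :
    (#{a ∈ A | (upperRank A v a : ℝ) ≤ k} : ℝ) ≤ k := by
  obtain h | h := (A.filter fun a => (upperRank A v a : ℝ) ≤ k).eq_empty_or_nonempty
  · simpa [h] using hk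
  -- the whole filtered set is counted in the rank of its `v`-minimum
  obtain ⟨a₀, ha₀, hmin⟩ := exists_min_image _ v h
  have hsub : {a ∈ A | (upperRank A v a : ℝ) ≤ k} ⊆ {b ∈ A | v a₀ ≤ v b} :=
    fun a ha => mem_filter.2 ⟨(mem_filter.1 ha).1, hmin a ha⟩
  calc (#{a ∈ A | (upperRank A v a : ℝ) ≤ k} : ℝ) ≤ upperRank A v a₀ := by
        exact_mod_cast card_le_card hsub
    _ ≤ k := (mem_filter.1 ha₀).2

variable {X : Type*} [MeasurableSpace X] {v : ι → X → ℝ}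

theorem measurable_upperRank (hv : ∀ b, Measurable (v b)) (A : Finset ι) (a : ι) :
    Measurable fun x => upperRank A (fun b => v b x) a := by
  simp only [upperRank, card_filter]
  exact Finset.measurable_sum _ fun b _ =>
    Measurable.ite (measurableSet_le (hv a) (hv b)) measurable_const measurable_const

theorem measurableSet_upperRank_le (hv : ∀ b, Measurable (v b)) (A : Finset ι) (a : ι)
    (k : ℝ) : MeasurableSet {x | (upperRank A (fun b => v b x) a : ℝ) ≤ k} :=
  measurableSet_le (measurable_from_nat.comp (measurable_upperRank hv A a)) measurable_const

theorem sum_measure_upperRank_le (μ : Measure X) (hv : ∀ b, Measurable (v b)) (A : Finset ι)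
    {k : ℝ} (hk : 0 ≤ k) :
    ∑ a ∈ A, μ {x | (upperRank A (fun b => v b x) a : ℝ) ≤ k} ≤
      ENNReal.ofReal k * μ Set.univ := by
  have hmeas := measurableSet_upperRank_le hv A
  calc ∑ a ∈ A, μ {x | (upperRank A (fun b => v b x) a : ℝ) ≤ k}
      = ∫⁻ x, (#{a ∈ A | (upperRank A (fun b => v b x) a : ℝ) ≤ k} : ℝ≥0∞) ∂μ := by
        simp_rw [card_filter, Nat.cast_sum, Nat.cast_ite, Nat.cast_one, Nat.cast_zero]
        rw [lintegral_finsetSum _ fun a _ =>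
          Measurable.ite (hmeas a k) measurable_const measurable_const]
        refine sum_congr rfl fun a _ => ?_
        rw [← lintegral_indicator_one (hmeas a k)]
        rfl
    _ ≤ ∫⁻ _, ENNReal.ofReal k ∂μ := lintegral_mono fun x => by
        rw [← ENNReal.ofReal_natCast]
        exact ENNReal.ofReal_le_ofReal (card_filter_upperRank_le A _ hk)
    _ = ENNReal.ofReal k * μ Set.univ := lintegral_const _

end Rank

section Translate

variable {G : Type*} [Group G] [DecidableEq G]

theorem upperRank_op_smul (A : Finset G) (v : G → ℝ) (a c : G) :
    upperRank (A <• c) v (a * c) = upperRank A (fun b => v (b * c)) a := by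
  simp only [upperRank, smul_finset_def, op_smul_eq_mul, filter_image]
  exact card_image_of_injective _ (mul_left_injective c)

theorem one_mem_op_inv_smul_iff {A : Finset G} {a : G} : 1 ∈ A <• a⁻¹ ↔ a ∈ A := by
  rw [← mul_inv_cancel a, ← op_smul_eq_mul, smul_mem_smul_finset_iff]

theorem card_nsmul_sum_one_mem [Fintype G] {β : Type*} [AddCommMonoid β] (M : ℕ)
    (f : Finset G → β) :
    Fintype.card G • ∑ T with 1 ∈ T ∧ #T = M, f T =
      ∑ A with #A = M, ∑ a ∈ A, f (A <• a⁻¹) := by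
  rw [sum_comm' (t' := univ) (s' := fun a => {A | a ∈ A ∧ #A = M}) (by simp [and_comm]),
    ← card_univ, ← sum_const]
  refine sum_congr rfl fun a _ => ?_
  -- right translation by `a⁻¹` maps the `M`-sets containing `a` onto those containing `1`
  refine sum_nbij' (· <• a) (· <• a⁻¹) (fun T hT => ?_) (fun A hA => ?_) ?_ ?_
    fun _ _ => ?_
  · simp only [mem_filter, mem_univ, true_and, card_smul_finset] at hT ⊢
    exact ⟨by simpa using smul_mem_smul_finset (a := op a) hT.1, hT.2⟩
  · simp only [mem_filter, mem_univ, true_and, card_smul_finset] at hA ⊢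
    exact ⟨one_mem_op_inv_smul_iff.2 hA.1, hA.2⟩
  all_goals simp [smul_smul]

variable {X : Type*} [MulAction G X] [MeasurableSpace X]

theorem measure_upperRank_op_inv_smul (μ : Measure X) [SMulInvariantMeasure G X μ]
    (g : X → ℝ) (A : Finset G) (a : G) (k : ℝ) :
    μ {x | (upperRank (A <• a⁻¹) (fun t => g (t • x)) 1 : ℝ) ≤ k} =
      μ {x | (upperRank A (fun b => g (b • x)) a : ℝ) ≤ k} := by
  rw [← measure_preimage_smul μ a]
  congr 1
  ext x
  simp only [Set.mem_preimage, Set.mem_ofPred_eq]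
  rw [← mul_inv_cancel a, upperRank_op_smul]
  simp only [smul_smul, inv_mul_cancel_right]

variable [Fintype G] [MeasurableConstSMul G X]

theorem sum_measure_upperRank_one_le (μ : Measure X) [SMulInvariantMeasure G X μ]
    {g : X → ℝ} (hg : Measurable g) (M : ℕ) {α : ℝ} (hα : 0 ≤ α) :
    ∑ T : Finset G with 1 ∈ T ∧ #T = M,
        μ {x | (upperRank T (fun t => g (t • x)) 1 : ℝ) ≤ α * M} ≤
      ENNReal.ofReal α * #{T : Finset G | 1 ∈ T ∧ #T = M} * μ Set.univ := by
  have hcount : (#{A : Finset G | #A = M} * M : ℝ≥0∞) =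
      Fintype.card G * #{T : Finset G | 1 ∈ T ∧ #T = M} := by
    have h := card_nsmul_sum_one_mem (G := G) M fun _ => (1 : ℕ)
    simp only [sum_const, smul_eq_mul, mul_one] at h
    rw [sum_const_nat fun A hA => (mem_filter.1 hA).2] at h
    exact_mod_cast h.symm
  refine (ENNReal.mul_le_mul_iff_right (a := Fintype.card G) (by simp) (by simp)).1 ?_
  calc (Fintype.card G : ℝ≥0∞) *
        ∑ T : Finset G with 1 ∈ T ∧ #T = M,
          μ {x | (upperRank T (fun t => g (t • x)) 1 : ℝ) ≤ α * M}
      = ∑ A : Finset G with #A = M,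
          ∑ a ∈ A, μ {x | (upperRank A (fun b => g (b • x)) a : ℝ) ≤ α * M} := by
        simp only [← nsmul_eq_mul, card_nsmul_sum_one_mem, measure_upperRank_op_inv_smul]
    _ ≤ ∑ A : Finset G with #A = M, ENNReal.ofReal (α * M) * μ Set.univ :=
        sum_le_sum fun A _ => sum_measure_upperRank_le μ
          (fun b => hg.comp (measurable_const_smul b)) A (by positivity)
    _ = ENNReal.ofReal α * μ Set.univ * (#{A : Finset G | #A = M} * M) := by
        rw [sum_const, nsmul_eq_mul, ENNReal.ofReal_mul hα, ENNReal.ofReal_natCast]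
        ring
    _ = Fintype.card G *
          (ENNReal.ofReal α * #{T : Finset G | 1 ∈ T ∧ #T = M} * μ Set.univ) := by
        rw [hcount]
        ring

end Translate

theorem measure_upperRank_one_le {Ω X G : Type*} [MeasurableSpace Ω] [MeasurableSpace X]
    [Group G] [Fintype G] [DecidableEq G] [MulAction G X] [MeasurableConstSMul G X]
    [MeasurableSpace (Finset G)] [MeasurableSingletonClass (Finset G)]
    (P : Measure Ω) [IsProbabilityMeasure P] {E : Ω → X} (hE : Measurable E)
    (hinv : ∀ a : G, P.map (fun ω => a • E ω) = P.map E) {g : X → ℝ} (hg : Measurable g)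
    {M : ℕ} {S : Ω → Finset G} (hS : Measurable S)
    (hSvalid : ∀ ω, 1 ∈ S ω ∧ #(S ω) = M)
    (hSunif : ∀ T T' : Finset G, 1 ∈ T → #T = M → 1 ∈ T' → #T' = M →
      P {ω | S ω = T} = P {ω | S ω = T'})
    (hindep : IndepFun S E P) {α : ℝ} (hα : 0 ≤ α) :
    P {ω | (upperRank (S ω) (fun t => g (t • E ω)) 1 : ℝ) ≤ α * M} ≤
      ENNReal.ofReal α := by
  have : IsProbabilityMeasure (P.map E) := Measure.isProbabilityMeasure_map hE.aemeasurable
  have : SMulInvariantMeasure G X (P.map E) := ⟨fun a B hB => by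
    rw [← Measure.map_apply (measurable_const_smul a) hB,
      Measure.map_map (measurable_const_smul a) hE]
    exact congrArg (· B) (hinv a)⟩
  set V : Finset (Finset G) := {T | 1 ∈ T ∧ #T = M}
  set B : Finset G → Set X :=
    fun T => {x | (upperRank T (fun t => g (t • x)) 1 : ℝ) ≤ α * M}
  have hB : ∀ T, MeasurableSet (B T) := fun T =>
    measurableSet_upperRank_le (fun t => hg.comp (measurable_const_smul t)) T 1 _
  obtain ⟨c, hc⟩ : ∃ c, ∀ T ∈ V, P (S ⁻¹' {T}) = c := by
    obtain hV | ⟨T₀, hT₀⟩ := V.eq_empty_or_nonempty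
    · exact ⟨0, by simp [hV]⟩
    · refine ⟨P (S ⁻¹' {T₀}), fun T hT => ?_⟩
      simp only [V, mem_filter, mem_univ, true_and] at hT hT₀
      exact hSunif T T₀ hT.1 hT.2 hT₀.1 hT₀.2
  have hcV : c * #V ≤ 1 := calc
    c * #V = ∑ T ∈ V, P (S ⁻¹' {T}) := by
      rw [sum_congr rfl hc, sum_const, nsmul_eq_mul, mul_comm]
    _ ≤ 1 := by
      rw [sum_measure_preimage_singleton V fun T _ => hS (measurableSet_singleton T)]
      exact prob_le_one
  calc P {ω | (upperRank (S ω) (fun t => g (t • E ω)) 1 : ℝ) ≤ α * M}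
      ≤ P (⋃ T ∈ V, S ⁻¹' {T} ∩ E ⁻¹' B T) := measure_mono fun ω hω =>
        Set.mem_biUnion (by simpa [V] using hSvalid ω) ⟨rfl, hω⟩
    _ ≤ ∑ T ∈ V, P (S ⁻¹' {T} ∩ E ⁻¹' B T) := measure_biUnion_finset_le _ _
    _ = c * ∑ T ∈ V, P.map E (B T) := by
        rw [mul_sum]
        refine sum_congr rfl fun T hT => ?_
        rw [hindep.measure_inter_preimage_eq_mul _ _ (measurableSet_singleton T) (hB T),
          hc T hT, Measure.map_apply hE (hB T)]
    _ ≤ c * (ENNReal.ofReal α * #V) := by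
        simpa using mul_le_mul_right (sum_measure_upperRank_one_le (P.map E) hg M hα) c
    _ ≤ ENNReal.ofReal α := by
        rw [mul_left_comm]
        exact mul_le_of_le_one_right' hcV

def boolEquivUnitsInt : Bool ≃ ℤˣ where
  toFun b := if b then 1 else -1
  invFun u := decide (u = 1)
  left_inv b := by cases b <;> decide
  right_inv u := by rcases Int.units_eq_one_or u with rfl | rfl <;> decide

def signEquiv (ι : Type*) : (ι → Bool) ≃ (ι → ℤˣ) :=
  Equiv.piCongrRight fun _ => boolEquivUnitsInt

theorem signEquiv_symm_one (ι : Type*) : (signEquiv ι).symm 1 = fun _ => true := rfl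

instance (m k : Type*) : MulAction (m → ℤˣ) (Matrix m k ℝ) :=
  inferInstanceAs (MulAction (m → ℤˣ) (m → k → ℝ))

instance (m k : Type*) : MeasurableConstSMul (m → ℤˣ) (Matrix m k ℝ) :=
  ⟨fun u => measurable_pi_lambda _ fun i => measurable_pi_lambda _ fun j => by
    change Measurable fun x : Matrix m k ℝ => u i • x i j
    simp only [Units.smul_def, zsmul_eq_mul]
    have hij : Measurable fun x : Matrix m k ℝ => x i j :=
      (measurable_pi_apply j).comp (measurable_pi_apply i)
    exact hij.const_mul _⟩

theorem signEquiv_smul {n k : ℕ} (s : Fin n → Bool) (x : Matrix (Fin n) (Fin k) ℝ) :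
    signEquiv (Fin n) s • x = signMat s * x := by
  ext i j
  rw [signMat, diagonal_mul]
  change signEquiv (Fin n) s i • x i j = _
  cases hs : s i <;> simp [signEquiv, boolEquivUnitsInt, hs]

theorem upperRank_signEquiv_finsetCongr {n k : ℕ} (T : Finset (Fin n → Bool))
    (g : Matrix (Fin n) (Fin k) ℝ → ℝ) (x : Matrix (Fin n) (Fin k) ℝ) :
    upperRank ((signEquiv (Fin n)).finsetCongr T) (fun t => g (t • x)) 1 =
      #{s ∈ T | g x ≤ g (signMat s * x)} := by
  simp [upperRank, filter_map, signEquiv_smul]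

theorem subsampled_randomization_pvalue_valid_general
    {Ω : Type*} [MeasurableSpace Ω] (P : Measure Ω) [IsProbabilityMeasure P]
    {n p : ℕ} (E : Ω → Matrix (Fin n) (Fin p) ℝ) (hE : Measurable E)
    (hinv : ∀ s : Fin n → Bool, P.map (fun ω => signMat s * E ω) = P.map E)
    (g : Matrix (Fin n) (Fin p) ℝ → ℝ) (hg : Measurable g)
    (M : ℕ)
    (S : Ω → Finset (Fin n → Bool)) (hS : Measurable S)
    -- each realization of S contains the identity pattern and has exactly M elements
    (hSvalid : ∀ ω, (fun _ => true) ∈ S ω ∧ (S ω).card = M)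
    -- S is uniformly distributed over all such sets (sampling without replacement)
    (hSunif : ∀ T T' : Finset (Fin n → Bool),
      (fun _ => true) ∈ T → T.card = M → (fun _ => true) ∈ T' → T'.card = M →
      P {ω | S ω = T} = P {ω | S ω = T'})
    -- S is independent of E
    (hindep : IndepFun S E P)
    (pvalM : Ω → ℝ)
    (hpvalM : ∀ ω, pvalM ω =
      (((S ω).filter fun s => g (E ω) ≤ g (signMat s * E ω)).card : ℝ) / M)
    (α : ℝ) (hα0 : 0 ≤ α) :
    P {ω | pvalM ω ≤ α} ≤ ENNReal.ofReal α := by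
  let : MeasurableSpace (Finset (Fin n → ℤˣ)) := ⊤
  have : MeasurableSingletonClass (Finset (Fin n → ℤˣ)) := ⟨fun _ => trivial⟩
  let e := (signEquiv (Fin n)).finsetCongr
  have he : Measurable e := fun _ _ => trivial
  have hinv' : ∀ u : Fin n → ℤˣ, P.map (fun ω => u • E ω) = P.map E :=
    (signEquiv (Fin n)).surjective.forall.2 fun s => by simpa only [signEquiv_smul] using hinv s
  have hSvalid' : ∀ ω, 1 ∈ e (S ω) ∧ #(e (S ω)) = M := fun ω => by
    simpa [e, mem_map_equiv, signEquiv_symm_one] using hSvalid ω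
  have hSunif' : ∀ T T' : Finset (Fin n → ℤˣ),
      1 ∈ T → #T = M → 1 ∈ T' → #T' = M →
      P {ω | e (S ω) = T} = P {ω | e (S ω) = T'} :=
    e.surjective.forall₂.2 fun T T' => by
      simpa only [e, Equiv.finsetCongr_apply, mem_map_equiv, signEquiv_symm_one, card_map,
        map_inj] using hSunif T T'
  have hevent : {ω | pvalM ω ≤ α} ⊆
      {ω | (upperRank (e (S ω)) (fun t => g (t • E ω)) 1 : ℝ) ≤ α * M} := fun ω hω => by
    have hM : (0 : ℝ) < M := by
      rw [← (hSvalid ω).2]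
      exact_mod_cast card_pos.2 ⟨_, (hSvalid ω).1⟩
    rw [Set.mem_ofPred_eq, upperRank_signEquiv_finsetCongr, ← div_le_iff₀ hM, ← hpvalM]
    exact hω
  exact (measure_mono hevent).trans <| measure_upperRank_one_le P hE hinv' hg (he.comp hS)
    hSvalid' hSunif' (hindep.comp he measurable_id) hα0

/-- Let `R^M` (encoded by the random finite set `S` of sign patterns) consist of the
identity together with M−1 elements drawn uniformly at random without replacement from
the remaining sign matrices, independently of E, whose distribution is invariant under
sign flips. Then the subsampled p-value `p_M(E) = |{R ∈ R^M : g(RE) ≥ g(E)}| / M`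
satisfies `P(p_M(E) ≤ α) ≤ α` for all α ∈ [0,1]. -/
theorem subsampled_randomization_pvalue_valid
    {Ω : Type*} [MeasurableSpace Ω] (P : Measure Ω) [IsProbabilityMeasure P]
    {n p : ℕ} (E : Ω → Matrix (Fin n) (Fin p) ℝ) (hE : Measurable E)
    (hinv : ∀ s : Fin n → Bool, P.map (fun ω => signMat s * E ω) = P.map E)
    (g : Matrix (Fin n) (Fin p) ℝ → ℝ) (hg : Measurable g)
    (M : ℕ) (hM : 1 ≤ M) (hM' : M ≤ 2 ^ n)
    (S : Ω → Finset (Fin n → Bool)) (hS : Measurable S)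
    -- each realization of S contains the identity pattern and has exactly M elements
    (hSvalid : ∀ ω, (fun _ => true) ∈ S ω ∧ (S ω).card = M)
    -- S is uniformly distributed over all such sets (sampling without replacement)
    (hSunif : ∀ T T' : Finset (Fin n → Bool),
      (fun _ => true) ∈ T → T.card = M → (fun _ => true) ∈ T' → T'.card = M →
      P {ω | S ω = T} = P {ω | S ω = T'})
    -- S is independent of E
    (hindep : IndepFun S E P)
    (pvalM : Ω → ℝ)
    (hpvalM : ∀ ω, pvalM ω =
      (((S ω).filter fun s => g (E ω) ≤ g (signMat s * E ω)).card : ℝ) / M)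
    (α : ℝ) (hα0 : 0 ≤ α) (hα1 : α ≤ 1) :
    P {ω | pvalM ω ≤ α} ≤ ENNReal.ofReal α :=
  subsampled_randomization_pvalue_valid_general P E hE hinv g hg M S hS hSvalid hSunif hindep pvalM
    hpvalM α hα0
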